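/- arXiv:2008.09004 — 7 statements merged into one kernel-verified Lean document; each statement's English description precedes it below -/
import Mathlib

section
/- Let G = (A, B, E) be a bipartite graph admitting a circular ordering a₁, …, aₙ of A such that the neighbourhood in A of every vertex b ∈ B is an interval of the circular ordering. Let B₁ be the set of vertices of B whose neighbourhood contains aₙ. Then for any three distinct vertices u₁, u₂, u₃ ∈ B₁, one of the neighbourhoods N(u₁), N(u₂), N(u₃) is contained in the union of the other two. -/
/-- A subset of `ZMod n` is an interval of the circular ordering if it consists of
circularly consecutive elements. -/
def IsCircInterval {n : ℕ} (S : Finset (ZMod n)) : Prop :=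
  ∃ (a : ZMod n) (l : ℕ), S = (Finset.range l).image (fun i : ℕ => a + (i : ZMod n))

lemma interval_char {n : ℕ} [NeZero n] {S : Finset (ZMod n)} (hS : IsCircInterval S)
    {p : ZMod n} (hp : p ∈ S) :
    ∃ R L : ℕ, ∀ x : ZMod n, x ∈ S ↔ ((x - p).val ≤ R ∨ L ≤ (x - p).val) := by
  obtain ⟨a, l, rfl⟩ := hS
  simp only [Finset.mem_image, Finset.mem_range] at hp
  obtain ⟨i0, hi0, hpa⟩ := hp
  have hn : 0 < n := Nat.pos_of_ne_zero (NeZero.ne n)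
  by_cases hl : n ≤ l
  · refine ⟨n, 0, fun x => ?_⟩
    constructor
    · intro _; right; exact Nat.zero_le _
    · intro _
      simp only [Finset.mem_image, Finset.mem_range]
      refine ⟨(x - a).val, lt_of_lt_of_le (ZMod.val_lt _) hl, ?_⟩
      rw [ZMod.natCast_val, ZMod.cast_id]
      ring
  · push_neg at hl
    refine ⟨l - 1 - i0, n - i0, fun x => ?_⟩
    simp only [Finset.mem_image, Finset.mem_range]
    constructor
    · rintro ⟨i, hi, rfl⟩
      have hxp : (a + (i : ZMod n)) - p = (i : ZMod n) - (i0 : ZMod n) := by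
        rw [← hpa]; ring
      rcases le_or_gt i0 i with h | h
      · left
        have : (a + (i : ZMod n)) - p = ((i - i0 : ℕ) : ZMod n) := by
          rw [hxp, Nat.cast_sub h]
        rw [this, ZMod.val_cast_of_lt (by omega)]
        omega
      · right
        have hc : (a + (i : ZMod n)) - p = -(((i0 - i : ℕ) : ZMod n)) := by
          rw [hxp, Nat.cast_sub h.le]; ring
        have hvc : (((i0 - i : ℕ) : ZMod n)).val = i0 - i :=
          ZMod.val_cast_of_lt (by omega)
        have hne : (((i0 - i : ℕ) : ZMod n)) ≠ 0 := by
          intro h0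
          rw [h0, ZMod.val_zero] at hvc
          omega
        rw [hc, ZMod.neg_val, if_neg hne, hvc]
        omega
    · intro h
      set f := (x - p).val with hf
      have hfn : f < n := ZMod.val_lt _
      have hcast : (f : ZMod n) = x - p := by
        rw [hf, ZMod.natCast_val, ZMod.cast_id]
      rcases h with h | h
      · refine ⟨i0 + f, by omega, ?_⟩
        push_cast
        rw [hcast, ← hpa]
        ring
      · refine ⟨i0 + f - n, by omega, ?_⟩
        have heq : ((i0 + f - n : ℕ) : ZMod n) = (i0 : ZMod n) + (f : ZMod n) := by
          have h1 : (i0 + f : ℕ) = (i0 + f - n) + n := by omega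
          calc ((i0 + f - n : ℕ) : ZMod n)
              = ((i0 + f - n : ℕ) : ZMod n) + (n : ZMod n) := by
                rw [ZMod.natCast_self]; ring
            _ = ((i0 + f - n + n : ℕ) : ZMod n) := by push_cast; ring
            _ = ((i0 + f : ℕ) : ZMod n) := by rw [show i0 + f - n + n = i0 + f by omega]
            _ = (i0 : ZMod n) + (f : ZMod n) := by push_cast; ring
        rw [heq, hcast, ← hpa]
        ring

lemma sub_lemma {n : ℕ} {S T U : Finset (ZMod n)} {p : ZMod n} {R L R' L' R'' L'' : ℕ}
    (hS : ∀ x : ZMod n, x ∈ S ↔ ((x - p).val ≤ R ∨ L ≤ (x - p).val))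
    (hT : ∀ x : ZMod n, x ∈ T ↔ ((x - p).val ≤ R' ∨ L' ≤ (x - p).val))
    (hU : ∀ x : ZMod n, x ∈ U ↔ ((x - p).val ≤ R'' ∨ L'' ≤ (x - p).val))
    (hR : R ≤ max R' R'') (hL : min L' L'' ≤ L) : S ⊆ T ∪ U := by
  intro x hx
  rw [hS] at hx
  rw [Finset.mem_union, hT, hU]
  omega

/-- In a circular convex bipartite graph, for any three distinct vertices
of `B` whose (circular-interval) neighbourhoods all contain the fixed point `p`
(representing `aₙ`), one of the neighbourhoods is contained in the union of the
other two. -/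
theorem stmt_3 {n : ℕ} [NeZero n] {B : Type*} (N : B → Finset (ZMod n)) (p : ZMod n)
    (hconv : ∀ b : B, IsCircInterval (N b))
    (u₁ u₂ u₃ : B) (h12 : u₁ ≠ u₂) (h13 : u₁ ≠ u₃) (h23 : u₂ ≠ u₃)
    (hp1 : p ∈ N u₁) (hp2 : p ∈ N u₂) (hp3 : p ∈ N u₃) :
    N u₁ ⊆ N u₂ ∪ N u₃ ∨ N u₂ ⊆ N u₁ ∪ N u₃ ∨ N u₃ ⊆ N u₁ ∪ N u₂ := by
  obtain ⟨R₁, L₁, h₁⟩ := interval_char (hconv u₁) hp1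
  obtain ⟨R₂, L₂, h₂⟩ := interval_char (hconv u₂) hp2
  obtain ⟨R₃, L₃, h₃⟩ := interval_char (hconv u₃) hp3
  have pick : (R₁ ≤ max R₂ R₃ ∧ min L₂ L₃ ≤ L₁) ∨ (R₂ ≤ max R₁ R₃ ∧ min L₁ L₃ ≤ L₂) ∨
      (R₃ ≤ max R₁ R₂ ∧ min L₁ L₂ ≤ L₃) := by omega
  rcases pick with ⟨hR, hL⟩ | ⟨hR, hL⟩ | ⟨hR, hL⟩
  · exact Or.inl (sub_lemma h₁ h₂ h₃ hR hL)
  · exact Or.inr (Or.inl (sub_lemma h₂ h₁ h₃ hR hL))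
  · exact Or.inr (Or.inr (sub_lemma h₃ h₁ h₂ hR hL))
end

section
/- Let G = (A, B, E) be a convex bipartite graph with linear order on A making every N(b), b ∈ B, an interval. For any partition of the vertices of G into a prefix and suffix with respect to the induced vertex order (A-vertices in order, each B-vertex placed immediately after its maximum neighbour), any induced matching in the bipartite cut graph between the two sides in which all B-endpoints lie on the larger side has size at most 1. -/
/-- For a convex bipartite graph and a prefix/suffix cut of the induced
vertex order (each `B`-vertex placed immediately after its maximum neighbour), any
induced matching in the cut graph whose `B`-endpoints all lie on the later side has
size at most 1.  A matching edge is recorded as a pair `(b, a)` with `a ∈ N b`; the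
condition that every `B`-endpoint lies after the cut while every `A`-endpoint lies
before it says precisely that each `A`-endpoint is at most the maximum neighbour of
each `B`-endpoint. -/
theorem stmt_5 {A : Type*} [LinearOrder A] {B : Type*} (N : B → Finset A)
    (hconv : ∀ b : B, ∀ x y z : A, x ∈ N b → z ∈ N b → x ≤ y → y ≤ z → y ∈ N b)
    (M : Finset (B × A))
    (hM : ∀ p ∈ M, p.2 ∈ N p.1)
    (hcut : ∀ p ∈ M, ∀ q ∈ M, ∃ a ∈ N q.1, p.2 ≤ a)
    (hind : ∀ p ∈ M, ∀ q ∈ M, p ≠ q → p.2 ∉ N q.1) :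
    M.card ≤ 1 := by
  by_contra h
  push_neg at h
  obtain ⟨p, hp, q, hq, hpq⟩ := Finset.one_lt_card.mp h
  rcases le_total p.2 q.2 with hle | hle
  · obtain ⟨a, ha, hqa⟩ := hcut q hq p hp
    exact hind q hq p hp (Ne.symm hpq) (hconv p.1 p.2 q.2 a (hM p hp) ha hle hqa)
  · obtain ⟨a, ha, hpa⟩ := hcut p hp q hq
    exact hind p hp q hq hpq (hconv q.1 q.2 p.2 a (hM q hq) ha hle hpa)
end

section
/- For every k ≥ 1, the graph G_k defined recursively by: G₁ is a single vertex (with A = {that vertex}, B = ∅), and G_k arises from the disjoint union of three copies H₁, H₂, H₃ of G_{k−1} with parts (Aᵢ, Bᵢ), by adding a new vertex u adjacent to all of A₁ ∪ A₂ ∪ A₃ (and setting A = A₁∪A₂∪A₃, B = B₁∪B₂∪B₃∪{u}), has proper thinness exactly k. -/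
/-- Vertex type of the recursively defined graph `G_{k+1}` (`Vt 0` is the vertex type
of `G₁`, a single vertex). -/
def Vt : ℕ → Type
  | 0 => Unit
  | (k + 1) => (Fin 3 × Vt k) ⊕ Unit

/-- The `A`-part of the bipartition of `G_{k+1}`. -/
def isA : (k : ℕ) → Vt k → Prop
  | 0, _ => True
  | (k + 1), Sum.inl iv => isA k iv.2
  | (_ + 1), Sum.inr _ => False

/-- The recursively defined graph: `Gk 0 = G₁` is a single vertex; `Gk (k+1) = G_{k+2}`
arises from three disjoint copies of `Gk k` by adding a new vertex adjacent to all
`A`-vertices of the three copies. -/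
def Gk : (k : ℕ) → SimpleGraph (Vt k)
  | 0 => ⊥
  | (k + 1) => SimpleGraph.fromRel (fun x y =>
      match x, y with
      | Sum.inl iv, Sum.inl jw => iv.1 = jw.1 ∧ (Gk k).Adj iv.2 jw.2
      | Sum.inr _, Sum.inl iv => isA k iv.2
      | _, _ => False)

/-- `G` is proper `k`-thin: there is a vertex order (an injection into `ℕ`) and a
partition into `k` classes that is strongly consistent. -/
def ProperKThin {V : Type*} (G : SimpleGraph V) (k : ℕ) : Prop :=
  ∃ (f : V → ℕ) (c : V → Fin k), Function.Injective f ∧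
    ∀ u v w : V, f u < f v → f v < f w → G.Adj u w →
      (c u = c v → G.Adj v w) ∧ (c v = c w → G.Adj u v)

theorem isA_inl (k : ℕ) (i : Fin 3) (v : Vt k) : isA (k+1) (Sum.inl (i,v)) ↔ isA k v := Iff.rfl
theorem isA_inr (k : ℕ) (u : Unit) : isA (k+1) (Sum.inr u) ↔ False := Iff.rfl

theorem gk_adj_inl_inl (k : ℕ) (i j : Fin 3) (v w : Vt k) :
    (Gk (k+1)).Adj (Sum.inl (i,v)) (Sum.inl (j,w)) ↔ i = j ∧ (Gk k).Adj v w := by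
  show (SimpleGraph.fromRel _).Adj _ _ ↔ _
  refine (SimpleGraph.fromRel_adj ..).trans ?_
  constructor
  · rintro ⟨-, h | h⟩
    · exact h
    · exact ⟨h.1.symm, h.2.symm⟩
  · rintro ⟨rfl, h⟩
    refine ⟨fun he => h.ne ?_, Or.inl ⟨rfl, h⟩⟩
    have : (i, v) = (i, w) := Sum.inl.inj he
    exact congrArg Prod.snd this

theorem gk_adj_inr_inl (k : ℕ) (u : Unit) (i : Fin 3) (v : Vt k) :
    (Gk (k+1)).Adj (Sum.inr u) (Sum.inl (i,v)) ↔ isA k v := by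
  show (SimpleGraph.fromRel _).Adj _ _ ↔ _
  refine (SimpleGraph.fromRel_adj ..).trans ?_
  constructor
  · rintro ⟨-, h | h⟩
    · exact h
    · exact h.elim
  · intro h
    exact ⟨Sum.inr_ne_inl, Or.inl h⟩

theorem gk_adj_inl_inr (k : ℕ) (u : Unit) (i : Fin 3) (v : Vt k) :
    (Gk (k+1)).Adj (Sum.inl (i,v)) (Sum.inr u) ↔ isA k v := by
  exact (SimpleGraph.adj_comm ..).trans (gk_adj_inr_inl k u i v)

theorem gk_adj_inr_inr (k : ℕ) (u u' : Unit) :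
    ¬ (Gk (k+1)).Adj (Sum.inr u) (Sum.inr u') := by
  show ¬ (SimpleGraph.fromRel _).Adj _ _
  refine mt (SimpleGraph.fromRel_adj ..).mp ?_
  rintro ⟨-, h | h⟩ <;> exact h

theorem exists_isA (k : ℕ) : ∃ v : Vt k, isA k v := by
  induction k with
  | zero => exact ⟨(), trivial⟩
  | succ k ih =>
    obtain ⟨v, hv⟩ := ih
    exact ⟨Sum.inl (0, v), hv⟩

theorem leaf_nbr (k : ℕ) (x : Vt k) : isA k x ∨ ∃ l, isA k l ∧ (Gk k).Adj x l := by
  induction k with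
  | zero => exact Or.inl trivial
  | succ k ih =>
    rcases x with ⟨i, v⟩ | u
    · rcases ih v with h | ⟨l, hl, hadj⟩
      · exact Or.inl h
      · exact Or.inr ⟨Sum.inl (i, l), hl, (gk_adj_inl_inl k i i v l).2 ⟨rfl, hadj⟩⟩
    · obtain ⟨l, hl⟩ := exists_isA k
      exact Or.inr ⟨Sum.inl (0, l), hl, (gk_adj_inr_inl k u 0 l).2 hl⟩

theorem fin3_val (i : Fin 3) : i.val = 0 ∨ i.val = 1 ∨ i.val = 2 := by omega

theorem block_eq {B a b : ℕ} {i j : Fin 3} (ha : a < B) (hb : b < B)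
    (h : i.val * B + a = j.val * B + b) : i = j ∧ a = b := by
  have hij : i = j := by
    rcases fin3_val i with hi|hi|hi <;> rcases fin3_val j with hj|hj|hj <;>
      rw [hi, hj] at h <;> first
      | exact Fin.ext (by omega)
      | exact absurd h (by omega)
  subst hij
  exact ⟨rfl, by omega⟩

theorem block_mid {B a b d : ℕ} {i j : Fin 3} (ha : a < B) (hb : b < B) (hd : d < B)
    (h1 : i.val * B + a < j.val * B + b) (h2 : j.val * B + b < i.val * B + d) : j = i := by
  rcases fin3_val i with hi|hi|hi <;> rcases fin3_val j with hj|hj|hj <;>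
    rw [hi, hj] at h1 h2 <;> first
    | exact Fin.ext (by omega)
    | exact absurd h1 (by omega)
    | exact absurd h2 (by omega)

def liftF {k : ℕ} (B : ℕ) (f : Vt k → ℕ) : Vt (k+1) → ℕ := fun x =>
  match x with
  | Sum.inl iv => iv.1.val * B + f iv.2
  | Sum.inr _ => 3 * B

@[simp] theorem liftF_inl {k} (B) (f : Vt k → ℕ) (i v) :
    liftF B f (Sum.inl (i, v)) = i.val * B + f v := rfl
@[simp] theorem liftF_inr {k} (B) (f : Vt k → ℕ) (u) : liftF B f (Sum.inr u) = 3 * B := rfl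

def liftC {k : ℕ} (c : Vt k → Fin (k+1)) : Vt (k+1) → Fin (k+2) := fun x =>
  match x with
  | Sum.inl iv => (c iv.2).castSucc
  | Sum.inr _ => Fin.last (k+1)

@[simp] theorem liftC_inl {k} (c : Vt k → Fin (k+1)) (i v) :
    liftC c (Sum.inl (i, v)) = (c v).castSucc := rfl
@[simp] theorem liftC_inr {k} (c : Vt k → Fin (k+1)) (u) : liftC c (Sum.inr u) = Fin.last (k+1) := rfl

theorem upper (k : ℕ) : ∃ (B : ℕ) (f : Vt k → ℕ) (c : Vt k → Fin (k+1)),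
    (∀ v, f v < B) ∧ Function.Injective f ∧
    (∀ v w : Vt k, c v = c w → (isA k v ↔ isA k w)) ∧
    ∀ u v w : Vt k, f u < f v → f v < f w → (Gk k).Adj u w →
      (c u = c v → (Gk k).Adj v w) ∧ (c v = c w → (Gk k).Adj u v) := by
  induction k with
  | zero =>
    refine ⟨1, fun _ => 0, fun _ => 0, fun _ => Nat.zero_lt_one, fun a b _ => rfl,
      fun _ _ _ => Iff.rfl, fun u v w h1 h2 _ => absurd h1 (lt_irrefl 0)⟩
  | succ k ih =>
    obtain ⟨B, f, c, hB, hf, hpure, hcons⟩ := ih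
    have hclast : ∀ v : Vt k, (c v).castSucc ≠ Fin.last (k+1) :=
      fun v => (Fin.castSucc_lt_last (c v)).ne
    refine ⟨3 * B + 1, liftF B f, liftC c, ?_, ?_, ?_, ?_⟩
    · rintro (⟨i, v⟩ | u)
      · have := hB v; have := i.isLt
        rw [liftF_inl]
        rcases fin3_val i with hi|hi|hi <;> rw [hi] <;> omega
      · rw [liftF_inr]; omega
    · rintro (⟨i, v⟩ | u) (⟨j, w⟩ | u') h
      · rw [liftF_inl, liftF_inl] at h
        obtain ⟨rfl, h2⟩ := block_eq (hB v) (hB w) h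
        rw [hf h2]
      · rw [liftF_inl, liftF_inr] at h
        exact absurd h (by have := hB v; rcases fin3_val i with hi|hi|hi <;> rw [hi] <;> omega)
      · rw [liftF_inr, liftF_inl] at h
        exact absurd h (by have := hB w; rcases fin3_val j with hj|hj|hj <;> rw [hj] <;> omega)
      · rfl
    · rintro (⟨i, v⟩ | u) (⟨j, w⟩ | u') h
      · rw [liftC_inl, liftC_inl] at h
        exact hpure v w (Fin.castSucc_injective _ h)
      · exact absurd h (by rw [liftC_inl, liftC_inr]; exact hclast v)
      · exact absurd h.symm (by rw [liftC_inl, liftC_inr]; exact hclast w)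
      · exact Iff.rfl
    · rintro (⟨i, v⟩ | u) (⟨j, w⟩ | u') (⟨i', t⟩ | u'') h1 h2 hadj
      · -- all inl
        rw [liftF_inl, liftF_inl] at h1
        rw [liftF_inl, liftF_inl] at h2
        rw [gk_adj_inl_inl] at hadj
        obtain ⟨rfl, hvt⟩ := hadj
        have hji : j = i := block_mid (hB v) (hB w) (hB t) h1 h2
        subst hji
        have hvw : f v < f w := by omega
        have hwt : f w < f t := by omega
        obtain ⟨o1, o2⟩ := hcons v w t hvw hwt hvt
        rw [liftC_inl, liftC_inl, gk_adj_inl_inl, gk_adj_inl_inl]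
        exact ⟨fun hcc => ⟨rfl, o1 (Fin.castSucc_injective _ hcc)⟩,
               fun hcc => ⟨rfl, o2 (Fin.castSucc_injective _ hcc)⟩⟩
      · -- x, y inl, z inr
        rw [gk_adj_inl_inr] at hadj
        rw [liftC_inl, liftC_inl, liftC_inr, gk_adj_inl_inr]
        exact ⟨fun hcc => (hpure v w (Fin.castSucc_injective _ hcc)).mp hadj,
               fun hcc => absurd hcc (hclast w)⟩
      · -- y inr, z inl : impossible
        simp only [liftF_inl, liftF_inr] at h1 h2
        have := hB t
        rcases fin3_val i' with hi|hi|hi <;> rw [hi] at h2 <;> omega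
      · -- y inr, z inr : impossible
        simp only [liftF_inl, liftF_inr] at h1 h2
        omega
      · -- x inr, y inl : impossible
        simp only [liftF_inl, liftF_inr] at h1
        have := hB w
        rcases fin3_val j with hj|hj|hj <;> rw [hj] at h1 <;> omega
      · simp only [liftF_inl, liftF_inr] at h1
        have := hB w
        rcases fin3_val j with hj|hj|hj <;> rw [hj] at h1 <;> omega
      · simp only [liftF_inr] at h1; omega
      · simp only [liftF_inr] at h1; omega

theorem lower (k : ℕ) : ∀ m : ℕ, ProperKThin (Gk k) m → k + 1 ≤ m := by
  induction k with
  | zero =>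
    rintro m ⟨f, c, -, -⟩
    exact (c ()).pos
  | succ k ih =>
    rintro m ⟨f, c, hf, hcons⟩
    set u : Vt (k+1) := Sum.inr () with hu
    -- different copies give different vertices
    have hne : ∀ (i j : Fin 3) (v w : Vt k), i ≠ j →
        (Sum.inl (i,v) : Vt (k+1)) ≠ Sum.inl (j,w) := by
      intro i j v w hij h
      exact hij (congrArg Prod.fst (Sum.inl.inj h))
    have hneu : ∀ (i : Fin 3) (v : Vt k), (Sum.inl (i,v) : Vt (k+1)) ≠ u := by
      intro i v h; exact Sum.inl_ne_inr h
    -- two class-c(u) vertices from different copies, both below u: impossible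
    have auxB : ∀ (i j : Fin 3) (v w : Vt k), i ≠ j →
        f (Sum.inl (i,v)) < f (Sum.inl (j,w)) → f (Sum.inl (j,w)) < f u →
        c (Sum.inl (i,v)) = c u → c (Sum.inl (j,w)) = c u → False := by
      intro i j v w hij h1 h2 hcv hcw
      rcases leaf_nbr k v with hv | ⟨l, hl, hadj⟩
      · have := (hcons _ _ _ h1 h2 ((gk_adj_inl_inr k () i v).2 hv)).2 hcw
        rw [gk_adj_inl_inl] at this
        exact hij this.1
      · -- l' := inl (i, l) is a leaf of copy i adjacent to v
        have hlw : f (Sum.inl (j,w)) < f (Sum.inl (i,l)) := by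
          rcases lt_or_gt_of_ne (fun h => hne j i w l hij.symm (hf h)) with h | h
          · exact h
          · exfalso
            have := (hcons _ _ _ h h2 ((gk_adj_inl_inr k () i l).2 hl)).2 hcw
            rw [gk_adj_inl_inl] at this
            exact hij this.1
        have := (hcons _ _ _ h1 hlw ((gk_adj_inl_inl k i i v l).2 ⟨rfl, hadj⟩)).1
          (hcv.trans hcw.symm)
        rw [gk_adj_inl_inl] at this
        exact hij this.1.symm
    -- two class-c(u) vertices from different copies, both above u: impossible
    have auxA : ∀ (i j : Fin 3) (v w : Vt k), i ≠ j →
        f u < f (Sum.inl (i,v)) → f (Sum.inl (i,v)) < f (Sum.inl (j,w)) →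
        c (Sum.inl (i,v)) = c u → c (Sum.inl (j,w)) = c u → False := by
      intro i j v w hij h1 h2 hcv hcw
      rcases leaf_nbr k w with hw | ⟨l, hl, hadj⟩
      · have := (hcons _ _ _ h1 h2 ((gk_adj_inr_inl k () j w).2 hw)).1 hcv.symm
        rw [gk_adj_inl_inl] at this
        exact hij this.1
      · have hlv : f (Sum.inl (j,l)) < f (Sum.inl (i,v)) := by
          rcases lt_or_gt_of_ne (fun h => hne j i l v hij.symm (hf h)) with h | h
          · exact h
          · exfalso
            have := (hcons _ _ _ h1 h ((gk_adj_inr_inl k () j l).2 hl)).1 hcv.symm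
            rw [gk_adj_inl_inl] at this
            exact hij this.1
        have := (hcons _ _ _ hlv h2 ((gk_adj_inl_inl k j j l w).2 ⟨rfl, hadj.symm⟩)).2
          (hcv.trans hcw.symm)
        rw [gk_adj_inl_inl] at this
        exact hij this.1.symm
    -- symmetric versions
    have keyB : ∀ (i j : Fin 3) (v w : Vt k), i ≠ j →
        f (Sum.inl (i,v)) < f u → f (Sum.inl (j,w)) < f u →
        c (Sum.inl (i,v)) = c u → c (Sum.inl (j,w)) = c u → False := by
      intro i j v w hij h1 h2 hcv hcw
      rcases lt_or_gt_of_ne (fun h => hne i j v w hij (hf h)) with h | h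
      · exact auxB i j v w hij h h2 hcv hcw
      · exact auxB j i w v hij.symm h h1 hcw hcv
    have keyA : ∀ (i j : Fin 3) (v w : Vt k), i ≠ j →
        f u < f (Sum.inl (i,v)) → f u < f (Sum.inl (j,w)) →
        c (Sum.inl (i,v)) = c u → c (Sum.inl (j,w)) = c u → False := by
      intro i j v w hij h1 h2 hcv hcw
      rcases lt_or_gt_of_ne (fun h => hne i j v w hij (hf h)) with h | h
      · exact auxA i j v w hij h1 h hcv hcw
      · exact auxA j i w v hij.symm h2 h hcw hcv
    -- some copy avoids the class of u
    have hcopy : ∃ i : Fin 3, ∀ v : Vt k, c (Sum.inl (i,v)) ≠ c u := by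
      by_contra hcon
      push_neg at hcon
      obtain ⟨v0, hv0⟩ := hcon 0
      obtain ⟨v1, hv1⟩ := hcon 1
      obtain ⟨v2, hv2⟩ := hcon 2
      have d0 : f (Sum.inl ((0 : Fin 3), v0)) ≠ f u := fun h => hneu 0 v0 (hf h)
      have d1 : f (Sum.inl ((1 : Fin 3), v1)) ≠ f u := fun h => hneu 1 v1 (hf h)
      have d2 : f (Sum.inl ((2 : Fin 3), v2)) ≠ f u := fun h => hneu 2 v2 (hf h)
      rcases lt_or_gt_of_ne d0 with h0 | h0 <;>
        rcases lt_or_gt_of_ne d1 with h1 | h1 <;>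
          rcases lt_or_gt_of_ne d2 with h2 | h2
      · exact keyB 0 1 v0 v1 (by decide) h0 h1 hv0 hv1
      · exact keyB 0 1 v0 v1 (by decide) h0 h1 hv0 hv1
      · exact keyB 0 2 v0 v2 (by decide) h0 h2 hv0 hv2
      · exact keyA 1 2 v1 v2 (by decide) h1 h2 hv1 hv2
      · exact keyB 1 2 v1 v2 (by decide) h1 h2 hv1 hv2
      · exact keyA 0 2 v0 v2 (by decide) h0 h2 hv0 hv2
      · exact keyA 0 1 v0 v1 (by decide) h0 h1 hv0 hv1
      · exact keyA 0 1 v0 v1 (by decide) h0 h1 hv0 hv1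
    obtain ⟨i, hi⟩ := hcopy
    -- m ≥ 2 since the class of u and some other class both occur
    obtain ⟨vv, -⟩ := exists_isA k
    have hm : 2 ≤ m := by
      have h1 := (c (Sum.inl (i,vv))).isLt
      have h2 := (c u).isLt
      have h3 : (c (Sum.inl (i,vv))).val ≠ (c u).val := fun h => hi vv (Fin.ext h)
      omega
    obtain ⟨m', rfl⟩ : ∃ m', m = m' + 1 := ⟨m - 1, by omega⟩
    have hm' : 1 ≤ m' := by omega
    -- build a representation of Gk k with m' classes
    obtain ⟨t, ht, hteq⟩ : ∃ t, t < m' + 1 ∧ (c u).val = t := ⟨_, (c u).isLt, rfl⟩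
    set g : Fin (m' + 1) → Fin m' := fun x =>
      if h : x.val < t then ⟨x.val, by omega⟩
      else ⟨x.val - 1, by have := x.isLt; omega⟩ with hg
    have hginj : ∀ x y : Fin (m' + 1), x ≠ c u → y ≠ c u → g x = g y → x = y := by
      intro x y hx hy hxy
      have hx' : x.val ≠ t := fun h => hx (Fin.ext (h.trans hteq.symm))
      have hy' : y.val ≠ t := fun h => hy (Fin.ext (h.trans hteq.symm))
      have hxl := x.isLt
      have hyl := y.isLt
      rw [hg] at hxy
      simp only [] at hxy
      apply Fin.ext
      by_cases hh1 : x.val < t <;> by_cases hh2 : y.val < t <;>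
        simp only [hh1, hh2, dif_pos, dif_neg, not_false_iff, Fin.mk.injEq] at hxy <;> omega
    apply Nat.succ_le_succ
    apply ih m'
    refine ⟨fun v => f (Sum.inl (i, v)), fun v => g (c (Sum.inl (i, v))), ?_, ?_⟩
    · intro a b h
      have := hf h
      have := Sum.inl.inj this
      exact congrArg Prod.snd this
    · intro a b d h1 h2 hadj
      obtain ⟨o1, o2⟩ := hcons _ _ _ h1 h2 ((gk_adj_inl_inl k i i a d).2 ⟨rfl, hadj⟩)
      constructor
      · intro hcc
        have := o1 (hginj _ _ (hi a) (hi b) hcc)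
        rw [gk_adj_inl_inl] at this
        exact this.2
      · intro hcc
        have := o2 (hginj _ _ (hi b) (hi d) hcc)
        rw [gk_adj_inl_inl] at this
        exact this.2

/-- the proper thinness of `G_k` equals `k` (here `Gk k` is `G_{k+1}`,
so its proper thinness is exactly `k + 1`). -/
theorem stmt_6 (k : ℕ) :
    ProperKThin (Gk k) (k + 1) ∧ ∀ m : ℕ, ProperKThin (Gk k) m → k + 1 ≤ m := by
  constructor
  · obtain ⟨B, f, c, hB, hf, hpure, hcons⟩ := upper k
    exact ⟨f, c, hf, hcons⟩
  · exact lower k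
end

section
/- Let G_k be the recursively defined graph from the family {G_k} (G₁ a single vertex; G_k obtained from three disjoint copies of G_{k−1} plus a universal vertex u adjacent to all A-vertices of the three copies). Then pthin(G_k) ≥ k; in particular, the class of convex bipartite graphs has unbounded proper thinness. -/
namespace ThinAux

/-- Closed neighbourhood of the `A`-part. -/
def NA (k : ℕ) (x : Vt k) : Prop :=
  isA k x ∨ ∃ a, isA k a ∧ (Gk k).Adj x a

lemma gk_succ (k : ℕ) : Gk (k + 1) = SimpleGraph.fromRel (fun x y =>
      match x, y with
      | Sum.inl iv, Sum.inl jw => iv.1 = jw.1 ∧ (Gk k).Adj iv.2 jw.2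
      | Sum.inr _, Sum.inl iv => isA k iv.2
      | _, _ => False) := rfl

lemma adj_inl_inl (k : ℕ) (i j : Fin 3) (v w : Vt k) :
    (Gk (k + 1)).Adj (Sum.inl (i, v)) (Sum.inl (j, w)) ↔ i = j ∧ (Gk k).Adj v w := by
  rw [gk_succ]; refine (SimpleGraph.fromRel_adj _ _ _).trans ?_
  constructor
  · rintro ⟨hne, h | h⟩
    · exact ⟨h.1, h.2⟩
    · exact ⟨h.1.symm, h.2.symm⟩
  · rintro ⟨rfl, h⟩
    exact ⟨fun e => h.ne (congrArg Prod.snd (Sum.inl.inj e)), Or.inl ⟨rfl, h⟩⟩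

lemma adj_inr_inl (k : ℕ) (un : Unit) (i : Fin 3) (v : Vt k) :
    (Gk (k + 1)).Adj (Sum.inr un) (Sum.inl (i, v)) ↔ isA k v := by
  rw [gk_succ]; refine (SimpleGraph.fromRel_adj _ _ _).trans ?_
  constructor
  · rintro ⟨hne, h | h⟩
    · exact h
    · exact h.elim
  · intro h
    exact ⟨Sum.inr_ne_inl, Or.inl h⟩

lemma exists_isA (k : ℕ) : ∃ a : Vt k, isA k a := by
  induction k with
  | zero => exact ⟨(), trivial⟩
  | succ k ih =>
    obtain ⟨a, ha⟩ := ih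
    exact ⟨Sum.inl (0, a), ha⟩

lemma na_lift (k : ℕ) (i : Fin 3) (x : Vt k) (hx : NA k x) :
    NA (k + 1) (Sum.inl (i, x)) := by
  rcases hx with h | ⟨a, ha, hadj⟩
  · exact Or.inl h
  · exact Or.inr ⟨Sum.inl (i, a), ha, (adj_inl_inl k i i x a).mpr ⟨rfl, hadj⟩⟩

theorem key : ∀ (k m : ℕ) (f : Vt k → ℕ) (c : Vt k → Fin m),
    Function.Injective f →
    (∀ u v w : Vt k, f u < f v → f v < f w → (Gk k).Adj u w →
      (c u = c v → (Gk k).Adj v w) ∧ (c v = c w → (Gk k).Adj u v)) →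
    ∀ J : Finset (Fin m), (∀ x, NA k x → c x ∉ J) → k + 1 + J.card ≤ m := by
  intro k
  induction k with
  | zero =>
    intro m f c hf hC J hJ
    have h : c () ∉ J := hJ () (Or.inl trivial)
    have hm : 0 < m := lt_of_le_of_lt (Nat.zero_le _) (c ()).isLt
    have hsub : J ⊆ (Finset.univ : Finset (Fin m)).erase (c ()) := by
      intro j hj
      exact Finset.mem_erase.mpr ⟨fun e => h (e ▸ hj), Finset.mem_univ _⟩
    have hcard := Finset.card_le_card hsub
    rw [Finset.card_erase_of_mem (Finset.mem_univ _), Finset.card_univ, Fintype.card_fin] at hcard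
    omega
  | succ k ih =>
    intro m f c hf hC J hJ
    set u : Vt (k + 1) := Sum.inr () with hu_def
    obtain ⟨a0, ha0⟩ := exists_isA k
    have hu_NA : NA (k + 1) u :=
      Or.inr ⟨Sum.inl (0, a0), ha0, (adj_inr_inl k () 0 a0).mpr ha0⟩
    have hj0 : c u ∉ J := hJ u hu_NA
    have notadj : ∀ (i i' : Fin 3) (x y : Vt k), i ≠ i' →
        ¬ (Gk (k + 1)).Adj (Sum.inl (i, x)) (Sum.inl (i', y)) := by
      intro i i' x y hne hadj
      exact hne ((adj_inl_inl k i i' x y).mp hadj).1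
    -- core contradiction lemma
    have core : ∀ (i i' : Fin 3), i ≠ i' → ∀ x y : Vt k, NA k x →
        c (Sum.inl (i, x)) = c u → c (Sum.inl (i', y)) = c u →
        ((f (Sum.inl (i, x)) < f (Sum.inl (i', y)) ∧ f (Sum.inl (i', y)) < f u) ∨
         (f u < f (Sum.inl (i', y)) ∧ f (Sum.inl (i', y)) < f (Sum.inl (i, x)))) → False := by
      intro i i' hii x y hNA hcx hcy hpos
      rcases hNA with hA | ⟨a, ha, hxa⟩
      · have hux : (Gk (k + 1)).Adj u (Sum.inl (i, x)) := (adj_inr_inl k () i x).mpr hA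
        rcases hpos with ⟨h1, h2⟩ | ⟨h1, h2⟩
        · exact notadj i i' x y hii
            ((hC (Sum.inl (i, x)) (Sum.inl (i', y)) u h1 h2 hux.symm).2 hcy)
        · exact notadj i' i y x hii.symm
            ((hC u (Sum.inl (i', y)) (Sum.inl (i, x)) h1 h2 hux).1 hcy.symm)
      · have hxa' : (Gk (k + 1)).Adj (Sum.inl (i, x)) (Sum.inl (i, a)) :=
          (adj_inl_inl k i i x a).mpr ⟨rfl, hxa⟩
        have hau : (Gk (k + 1)).Adj u (Sum.inl (i, a)) := (adj_inr_inl k () i a).mpr ha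
        have hay : f (Sum.inl (i, a)) ≠ f (Sum.inl (i', y)) := by
          intro e
          exact hii (congrArg Prod.fst (Sum.inl.inj (hf e)))
        rcases hpos with ⟨h1, h2⟩ | ⟨h1, h2⟩
        · rcases lt_or_gt_of_ne hay with hlt | hgt
          · exact notadj i i' a y hii
              ((hC (Sum.inl (i, a)) (Sum.inl (i', y)) u hlt h2 hau.symm).2 hcy)
          · exact notadj i' i y a hii.symm
              ((hC (Sum.inl (i, x)) (Sum.inl (i', y)) (Sum.inl (i, a)) h1 hgt hxa').1
                (hcx.trans hcy.symm))
        · rcases lt_or_gt_of_ne hay with hlt | hgt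
          · exact notadj i i' a y hii
              ((hC (Sum.inl (i, a)) (Sum.inl (i', y)) (Sum.inl (i, x)) hlt h2 hxa'.symm).2
                (hcy.trans hcx.symm))
          · exact notadj i' i y a hii.symm
              ((hC u (Sum.inl (i', y)) (Sum.inl (i, a)) h1 hgt hau).1 hcy.symm)
    -- select a copy whose N[A]-vertices avoid the class of u
    have hsel : ∃ i : Fin 3, ∀ x : Vt k, NA k x → c (Sum.inl (i, x)) ≠ c u := by
      by_contra hcon
      push_neg at hcon
      choose w hw1 hw2 using hcon
      have hside : ∀ i : Fin 3, f (Sum.inl (i, w i)) < f u ∨ f u < f (Sum.inl (i, w i)) := by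
        intro i
        refine lt_or_gt_of_ne (fun e => ?_)
        exact Sum.inl_ne_inr (hf e)
      have hneq : ∀ i i' : Fin 3, i ≠ i' →
          f (Sum.inl (i, w i)) ≠ f (Sum.inl (i', w i')) := by
        intro i i' hii e
        exact hii (congrArg Prod.fst (Sum.inl.inj (hf e)))
      have pairL : ∀ i i' : Fin 3, i ≠ i' → f (Sum.inl (i, w i)) < f u →
          f (Sum.inl (i', w i')) < f u → False := by
        intro i i' hii hli hli'
        rcases lt_or_gt_of_ne (hneq i i' hii) with h | h
        · exact core i i' hii (w i) (w i') (hw1 i) (hw2 i) (hw2 i') (Or.inl ⟨h, hli'⟩)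
        · exact core i' i hii.symm (w i') (w i) (hw1 i') (hw2 i') (hw2 i) (Or.inl ⟨h, hli⟩)
      have pairR : ∀ i i' : Fin 3, i ≠ i' → f u < f (Sum.inl (i, w i)) →
          f u < f (Sum.inl (i', w i')) → False := by
        intro i i' hii hri hri'
        rcases lt_or_gt_of_ne (hneq i i' hii) with h | h
        · exact core i' i hii.symm (w i') (w i) (hw1 i') (hw2 i') (hw2 i) (Or.inr ⟨hri, h⟩)
        · exact core i i' hii (w i) (w i') (hw1 i) (hw2 i) (hw2 i') (Or.inr ⟨hri', h⟩)
      rcases hside 0 with h0 | h0 <;> rcases hside 1 with h1 | h1 <;> rcases hside 2 with h2 | h2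
      · exact pairL 0 1 (by decide) h0 h1
      · exact pairL 0 1 (by decide) h0 h1
      · exact pairL 0 2 (by decide) h0 h2
      · exact pairR 1 2 (by decide) h1 h2
      · exact pairL 1 2 (by decide) h1 h2
      · exact pairR 0 2 (by decide) h0 h2
      · exact pairR 0 1 (by decide) h0 h1
      · exact pairR 0 1 (by decide) h0 h1
    obtain ⟨istar, hstar⟩ := hsel
    -- restrict to copy istar
    have hf' : Function.Injective (fun v : Vt k => f (Sum.inl (istar, v))) := by
      intro a b e
      exact congrArg Prod.snd (Sum.inl.inj (hf e))
    have hC' : ∀ a b d : Vt k,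
        f (Sum.inl (istar, a)) < f (Sum.inl (istar, b)) →
        f (Sum.inl (istar, b)) < f (Sum.inl (istar, d)) → (Gk k).Adj a d →
        ((fun v : Vt k => c (Sum.inl (istar, v))) a = (fun v => c (Sum.inl (istar, v))) b →
          (Gk k).Adj b d) ∧
        ((fun v : Vt k => c (Sum.inl (istar, v))) b = (fun v => c (Sum.inl (istar, v))) d →
          (Gk k).Adj a b) := by
      intro a b d h1 h2 hadj
      have := hC (Sum.inl (istar, a)) (Sum.inl (istar, b)) (Sum.inl (istar, d)) h1 h2
        ((adj_inl_inl k istar istar a d).mpr ⟨rfl, hadj⟩)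
      exact ⟨fun e => ((adj_inl_inl k istar istar b d).mp (this.1 e)).2,
             fun e => ((adj_inl_inl k istar istar a b).mp (this.2 e)).2⟩
    have hJ' : ∀ x, NA k x →
        (fun v : Vt k => c (Sum.inl (istar, v))) x ∉ insert (c u) J := by
      intro x hx
      rw [Finset.mem_insert]
      push_neg
      exact ⟨hstar x hx, hJ (Sum.inl (istar, x)) (na_lift k istar x hx)⟩
    have := ih m (fun v => f (Sum.inl (istar, v))) (fun v => c (Sum.inl (istar, v)))
      hf' hC' (insert (c u) J) hJ'
    rw [Finset.card_insert_of_notMem hj0] at this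
    omega

end ThinAux

/-- the proper thinness of `G_k` is at least `k` (here `Gk k` is
`G_{k+1}`, so any strongly consistent partition needs at least `k + 1` classes);
in particular proper thinness is unbounded on this family of convex graphs. -/
theorem stmt_7 (k : ℕ) (m : ℕ) (h : ProperKThin (Gk k) m) : k + 1 ≤ m := by
  obtain ⟨f, c, hf, hC⟩ := h
  have := ThinAux.key k m f c hf hC ∅ (by simp)
  simpa using this
end

section
/- A linear order < on V(G) and a partition V¹,…,V^k of V(G) are strongly consistent if and only if for every vertex v ∈ V(G) and every j ∈ {1,…,k}, the set N[v] ∩ (V^j ∪ {v}) is consecutive in V^j ∪ {v} according to <. -/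
/-- An order and a partition (classes given by a colouring `c`) are strongly
consistent. -/
def StronglyConsistent {V : Type*} [LinearOrder V] (G : SimpleGraph V) {k : ℕ}
    (c : V → Fin k) : Prop :=
  ∀ r s t : V, r < s → s < t → G.Adj r t →
    (c r = c s → G.Adj s t) ∧ (c s = c t → G.Adj r s)

/-- `X ⊆ S` is consecutive in `S` according to the order: there is no `z ∈ S \ X`
with `min X < z < max X`. -/
def ConsecutiveIn {V : Type*} [LinearOrder V] (S X : Set V) : Prop :=
  ∀ z ∈ S, z ∉ X → ¬((∃ x ∈ X, x < z) ∧ (∃ y ∈ X, z < y))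

/-- an order and a partition are strongly consistent iff for every vertex
`v` and every class `V^j`, the set `N[v] ∩ (V^j ∪ {v})` is consecutive in `V^j ∪ {v}`. -/
theorem stmt_8 {V : Type*} [LinearOrder V] (G : SimpleGraph V) (k : ℕ) (c : V → Fin k) :
    StronglyConsistent G c ↔
      ∀ (v : V) (j : Fin k),
        ConsecutiveIn ({x | c x = j} ∪ {v})
          (({x | G.Adj v x} ∪ {v}) ∩ ({x | c x = j} ∪ {v})) := by
  constructor
  · intro hSC v j z hzS hzX ⟨⟨x, hxX, hxz⟩, ⟨y, hyX, hzy⟩⟩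
    -- z ∉ N[v], z ≠ v, c z = j
    have hzv : z ≠ v := by
      rintro rfl
      exact hzX ⟨Or.inr rfl, Or.inr rfl⟩
    have hcz : c z = j := hzS.resolve_right hzv
    have hzadj : ¬ G.Adj v z := fun h => hzX ⟨Or.inl h, hzS⟩
    rcases lt_trichotomy v z with hvz | hvz | hvz
    · -- use y: v < z < y, Adj v y, c z = c y
      have hyv : y ≠ v := fun h => absurd (h ▸ hzy) (not_lt.mpr hvz.le)
      have hady : G.Adj v y := (hyX.1.resolve_right hyv)
      have hcy : c y = j := hyX.2.resolve_right hyv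
      exact hzadj ((hSC v z y hvz hzy hady).2 (hcz.trans hcy.symm))
    · exact hzv hvz.symm
    · -- use x: x < z < v, Adj x v, c x = c z
      have hxv : x ≠ v := fun h => absurd (h ▸ hxz) (not_lt.mpr hvz.le)
      have hadx : G.Adj x v := ((hxX.1.resolve_right hxv)).symm
      have hcx : c x = j := hxX.2.resolve_right hxv
      have := (hSC x z v hxz hvz hadx).1 (hcx.trans hcz.symm)
      exact hzadj this.symm
  · intro h r s t hrs hst hrt
    constructor
    · intro hcrs
      by_contra hst'
      refine h t (c r) s (Or.inl hcrs.symm) ?_ ⟨⟨r, ⟨Or.inl hrt.symm, Or.inl rfl⟩, hrs⟩,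
        ⟨t, ⟨Or.inr rfl, Or.inr rfl⟩, hst⟩⟩
      rintro ⟨h1 | h1, -⟩
      · exact hst' (Set.mem_setOf_eq ▸ h1).symm
      · exact absurd h1 (ne_of_lt hst)
    · intro hcst
      by_contra hrs'
      refine h r (c t) s (Or.inl hcst) ?_ ⟨⟨r, ⟨Or.inr rfl, Or.inr rfl⟩, hrs⟩,
        ⟨t, ⟨Or.inl hrt, Or.inl rfl⟩, hst⟩⟩
      rintro ⟨h1 | h1, -⟩
      · exact hrs' h1
      · exact absurd h1.symm (ne_of_lt hrs)
end

section
/- For every graph G, the proper thinness of G satisfies pthin(G) ≤ 2^{pw(G)} · (pw(G) + 1), where pw(G) is the path-width of G. -/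
/-- Greedy slot assignment: `slotAux` assigns each vertex a slot in `Fin (w+1)`
distinct from the slots of all earlier (in `ord`) vertices in `P v`. -/
noncomputable def slotAux {V : Type*} [DecidableEq V] (w : ℕ) (P : V → Finset V) (ord : V → ℕ)
    (hw : ∀ v, ((P v).filter (fun x => ord x < ord v)).card ≤ w) (v : V) : Fin (w + 1) :=
  (Finset.univ \ ((P v).filter (fun x => ord x < ord v)).attach.image
      (fun x => slotAux w P ord hw x.1)).min' (by
    rw [← Finset.card_pos, Finset.card_sdiff_of_subset (Finset.subset_univ _)]
    have h1 : (((P v).filter (fun x => ord x < ord v)).attach.image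
        (fun x => slotAux w P ord hw x.1)).card ≤ w := by
      refine le_trans Finset.card_image_le ?_
      rw [Finset.card_attach]; exact hw v
    simp only [Finset.card_univ, Fintype.card_fin]
    omega)
termination_by ord v
decreasing_by
  all_goals
    have hx := x.2
    simp only [Finset.mem_filter] at hx
    exact hx.2

theorem slotAux_ne {V : Type*} [DecidableEq V] (w : ℕ) (P : V → Finset V) (ord : V → ℕ)
    (hw : ∀ v, ((P v).filter (fun x => ord x < ord v)).card ≤ w) {u v : V}
    (hu : u ∈ P v) (ho : ord u < ord v) :
    slotAux w P ord hw u ≠ slotAux w P ord hw v := by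
  have hv : slotAux w P ord hw v ∈ Finset.univ \ ((P v).filter
      (fun x => ord x < ord v)).attach.image (fun x => slotAux w P ord hw x.1) := by
    rw [slotAux]; exact Finset.min'_mem _ _
  rw [Finset.mem_sdiff] at hv
  intro h
  apply hv.2
  rw [← h]
  exact Finset.mem_image.mpr ⟨⟨u, Finset.mem_filter.mpr ⟨hu, ho⟩⟩, Finset.mem_attach _ _, rfl⟩

/-- `pthin(G) ≤ 2^{pw(G)} · (pw(G) + 1)`: any graph admitting a path
decomposition of width `w` is proper `2^w · (w+1)`-thin. -/
theorem stmt_9 {V : Type*} [Fintype V] [DecidableEq V] (G : SimpleGraph V) (w : ℕ)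
    (hpd : ∃ (n : ℕ) (bags : Fin n → Finset V),
      (∀ v : V, ∃ i, v ∈ bags i) ∧
      (∀ u v : V, G.Adj u v → ∃ i, u ∈ bags i ∧ v ∈ bags i) ∧
      (∀ (v : V) (i j l : Fin n), i ≤ j → j ≤ l → v ∈ bags i → v ∈ bags l → v ∈ bags j) ∧
      (∀ i, (bags i).card ≤ w + 1)) :
    ProperKThin G (2 ^ w * (w + 1)) := by
  classical
  obtain ⟨n, bags, hcover, hedge, hconv, hcard⟩ := hpd
  rcases isEmpty_or_nonempty V with hemp | hne
  · exact ⟨isEmptyElim, isEmptyElim, by intro a; exact isEmptyElim a, fun a => isEmptyElim a⟩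
  set C := Fintype.card V with hC
  have hCpos : 0 < C := Fintype.card_pos
  set t : V ≃ Fin C := Fintype.equivFin V with ht
  have hI : ∀ v : V, (Finset.univ.filter (fun i => v ∈ bags i)).Nonempty := by
    intro v
    obtain ⟨i, hi⟩ := hcover v
    exact ⟨i, by simp [hi]⟩
  set l : V → Fin n := fun v => (Finset.univ.filter (fun i => v ∈ bags i)).min' (hI v) with hl
  have hlmem : ∀ v, v ∈ bags (l v) := by
    intro v
    have := Finset.min'_mem _ (hI v)
    simpa [hl] using this
  have hlle : ∀ v i, v ∈ bags i → l v ≤ i := by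
    intro v i hi
    exact Finset.min'_le _ _ (by simp [hi])
  set ord : V → ℕ := fun v => (l v).val * C + (t v).val with hordd
  have hdiv : ∀ v, ord v / C = (l v).val := by
    intro v
    simp only [hordd]
    rw [mul_comm, Nat.mul_add_div hCpos, Nat.div_eq_of_lt (t v).isLt, add_zero]
  have hmod : ∀ v, ord v % C = (t v).val := by
    intro v
    simp only [hordd]
    rw [mul_comm, Nat.mul_add_mod, Nat.mod_eq_of_lt (t v).isLt]
  have hordinj : Function.Injective ord := by
    intro a b hab
    have h1 : (t a).val = (t b).val := by rw [← hmod a, ← hmod b, hab]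
    exact t.injective (Fin.ext h1)
  have hordl : ∀ u v, ord u < ord v → l u ≤ l v := by
    intro u v h
    have h2 : ord u / C ≤ ord v / C := Nat.div_le_div_right (le_of_lt h)
    rw [hdiv u, hdiv v] at h2
    exact h2
  -- convexity helper
  have hmem : ∀ u v i, u ∈ bags i → l v ≤ i → l u ≤ l v → u ∈ bags (l v) := by
    intro u v i hui h1 h2
    exact hconv u (l u) (l v) i h2 h1 (hlmem u) hui
  set P : V → Finset V := fun v => bags (l v) with hP
  have hw : ∀ v, ((P v).filter (fun x => ord x < ord v)).card ≤ w := by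
    intro v
    have hsub : (P v).filter (fun x => ord x < ord v) ⊆ (P v).erase v := by
      intro x hx
      rw [Finset.mem_filter] at hx
      refine Finset.mem_erase.mpr ⟨?_, hx.1⟩
      rintro rfl
      exact lt_irrefl _ hx.2
    calc ((P v).filter (fun x => ord x < ord v)).card ≤ ((P v).erase v).card :=
          Finset.card_le_card hsub
      _ = (P v).card - 1 := Finset.card_erase_of_mem (hlmem v)
      _ ≤ (w + 1) - 1 := Nat.sub_le_sub_right (hcard (l v)) 1
      _ = w := rfl
  set slot : V → Fin (w + 1) := slotAux w P ord hw with hslotdef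
  have hslot : ∀ u v i, u ≠ v → u ∈ bags i → v ∈ bags i → slot u ≠ slot v := by
    intro u v i huv hu hv
    rcases lt_or_gt_of_ne (fun h => huv (hordinj h)) with h | h
    · exact slotAux_ne w P ord hw (hmem u v i hu (hlle v i hv) (hordl u v h)) h
    · exact (slotAux_ne w P ord hw (hmem v u i hv (hlle u i hu) (hordl v u h)) h).symm
  set S : V → Finset (Fin w) := fun v => Finset.univ.filter
    (fun j => ∃ x ∈ bags (l v), G.Adj x v ∧ slot x = (slot v).succAbove j) with hS
  set e : (Fin (w + 1) × Finset (Fin w)) ≃ Fin (2 ^ w * (w + 1)) :=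
    Fintype.equivFinOfCardEq (by simp [Fintype.card_finset, mul_comm]) with he
  refine ⟨ord, fun v => e (slot v, S v), hordinj, ?_⟩
  intro u v x hou hov hadj
  constructor
  · intro hcuv
    exfalso
    have hpair : (slot u, S u) = (slot v, S v) := e.injective hcuv
    have hs : slot u = slot v := congrArg Prod.fst hpair
    obtain ⟨i, hui, hxi⟩ := hedge u x hadj
    have hlu : l u ≤ l v := hordl u v hou
    have hlvi : l v ≤ i := le_trans (hordl v x hov) (hlle x i hxi)
    have humem : u ∈ bags (l v) := hmem u v i hui hlvi hlu
    exact hslot u v (l v) (by rintro rfl; exact lt_irrefl _ hou) humem (hlmem v) hs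
  · intro hcvx
    have hpair : (slot v, S v) = (slot x, S x) := e.injective hcvx
    have hs : slot v = slot x := congrArg Prod.fst hpair
    have hSeq : S v = S x := congrArg Prod.snd hpair
    obtain ⟨i, hui, hxi⟩ := hedge u x hadj
    have hlu : l u ≤ l v := hordl u v hou
    have hlv : l v ≤ l x := hordl v x hov
    have hlxi : l x ≤ i := hlle x i hxi
    have hulx : u ∈ bags (l x) := hmem u x i hui hlxi (le_trans hlu hlv)
    have hulv : u ∈ bags (l v) := hmem u v i hui (le_trans hlv hlxi) hlu
    have hux : u ≠ x := G.ne_of_adj hadj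
    have hsux : slot u ≠ slot x := hslot u x (l x) hux hulx (hlmem x)
    obtain ⟨j, hj⟩ := Fin.exists_succAbove_eq hsux
    have hjx : j ∈ S x := by
      rw [hS]
      simp only [Finset.mem_filter, Finset.mem_univ, true_and]
      exact ⟨u, hulx, hadj, hj.symm⟩
    have hjv : j ∈ S v := hSeq ▸ hjx
    rw [hS] at hjv
    simp only [Finset.mem_filter, Finset.mem_univ, true_and] at hjv
    obtain ⟨y, hy, hyadj, hys⟩ := hjv
    have hsy : slot y = slot u := by rw [hys, hs, hj]
    have hyu : y = u := by
      by_contra hne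
      exact hslot y u (l v) hne hy hulv hsy
    exact hyu ▸ hyadj
end

section
/- Suppose a graph G admits a vertex order and a consistent partition into q+1 independent sets (colour classes) such that each vertex has at most one neighbour smaller than itself in each colour class, namely the greatest smaller vertex of that class if adjacent. Then refining each colour class according to the subset of other colours in which a vertex has a smaller neighbour yields a partition into at most 2^q (q+1) classes that is strongly consistent with the same order. -/
/-- given a vertex order and a consistent partition into `q+1`
independent colour classes in which each vertex has at most one smaller neighbour per
class (namely the greatest smaller vertex of that class, if adjacent), refining each
class by the set of colours in which a vertex has a smaller neighbour yields a
partition into at most `2^q (q+1)` classes strongly consistent with the same order. -/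
theorem stmt_10 {V : Type*} [LinearOrder V] (G : SimpleGraph V) (q : ℕ)
    (c : V → Fin (q + 1))
    (hind : ∀ u v : V, c u = c v → ¬G.Adj u v)
    (hcons : ∀ r s t : V, r < s → s < t → G.Adj r t → c r = c s → G.Adj s t)
    (hgreatest : ∀ v u x : V, u < v → G.Adj v u → x < v → c x = c u → x ≤ u) :
    ∃ c' : V → Fin (2 ^ q * (q + 1)),
      (∀ u v : V, c' u = c' v ↔
        (c u = c v ∧ ∀ j : Fin (q + 1),
          ((∃ x, x < u ∧ G.Adj u x ∧ c x = j) ↔ (∃ x, x < v ∧ G.Adj v x ∧ c x = j)))) ∧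
      (∀ r s t : V, r < s → s < t → G.Adj r t →
        (c' r = c' s → G.Adj s t) ∧ (c' s = c' t → G.Adj r s)) := by
  classical
  set f : V → Fin (q + 1) → Bool :=
    fun v j => decide (∃ x, x < v ∧ G.Adj v x ∧ c x = j) with hf
  have hf_self : ∀ v, f v (c v) = false := by
    intro v
    simp only [hf, decide_eq_false_iff_not]
    rintro ⟨x, _, hadj, hcx⟩
    exact hind v x hcx.symm hadj
  have hcard : Fintype.card (Fin (q + 1) × (Fin q → Bool)) = 2 ^ q * (q + 1) := by
    simp [Fintype.card_fun]; ring
  let e : (Fin (q + 1) × (Fin q → Bool)) ≃ Fin (2 ^ q * (q + 1)) :=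
    Fintype.equivFinOfCardEq hcard
  refine ⟨fun v => e (c v, fun i => f v ((c v).succAbove i)), ?_, ?_⟩
  · -- key characterisation
    have key : ∀ u v : V, e (c u, fun i => f u ((c u).succAbove i)) =
        e (c v, fun i => f v ((c v).succAbove i)) ↔ (c u = c v ∧ f u = f v) := by
      intro u v
      rw [e.apply_eq_iff_eq, Prod.mk.injEq]
      constructor
      · rintro ⟨hc, hfun⟩
        refine ⟨hc, funext fun j => ?_⟩
        by_cases hj : j = c u
        · rw [hj, hf_self u, hc, hf_self v]
        · obtain ⟨i, hi⟩ := Fin.exists_succAbove_eq (hj : j ≠ c u)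
          have := congrFun hfun i
          rw [← hi, this, hc]
      · rintro ⟨hc, hfeq⟩
        exact ⟨hc, funext fun i => by rw [hfeq, hc]⟩
    intro u v
    rw [key u v]
    constructor
    · rintro ⟨hc, hfeq⟩
      refine ⟨hc, fun j => ?_⟩
      have := congrFun hfeq j
      simpa only [hf, decide_eq_decide] using this
    · rintro ⟨hc, hiff⟩
      refine ⟨hc, funext fun j => ?_⟩
      simpa only [hf, decide_eq_decide] using hiff j
  · intro r s t hrs hst hadj
    constructor
    · intro h
      have hpair := e.injective h
      have hc : c r = c s := congrArg Prod.fst hpair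
      exact hcons r s t hrs hst hadj hc
    · intro h
      have hpair := e.injective h
      have hc : c s = c t := congrArg Prod.fst hpair
      -- f s = f t as in key
      have hfeq : f s (c r) = f t (c r) := by
        by_cases hj : c r = c s
        · rw [hj, hf_self s, hc, hf_self t]
        · obtain ⟨i, hi⟩ := Fin.exists_succAbove_eq (hj : c r ≠ c s)
          have := congrFun (congrArg Prod.snd hpair) i
          simp only at this
          rw [← hi, this, hc]
      have hft : f t (c r) = true := by
        simp only [hf, decide_eq_true_eq]
        exact ⟨r, hrs.trans hst, hadj.symm, rfl⟩
      rw [hft] at hfeq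
      have : ∃ x, x < s ∧ G.Adj s x ∧ c x = c r := by
        simpa only [hf, decide_eq_true_eq] using hfeq
      obtain ⟨x, hxs, hadjsx, hcx⟩ := this
      have hxr : x ≤ r := hgreatest t r x (hrs.trans hst) hadj.symm (hxs.trans hst) hcx
      rcases eq_or_lt_of_le hxr with heq | hlt
      · rw [← heq]; exact hadjsx.symm
      · exact hcons x r s hlt hrs hadjsx.symm hcx
end
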